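/- arXiv:1811.12429 — 3 statements merged into one kernel-verified Lean document; each statement's English description precedes it below -/
import Mathlib

section
/- Let xs < xt be integers, C ≥ 0 a real number, and f : ℤ → ℝ a function satisfying the Ameso(C) condition on [xs,xt]. Suppose there exist x0 ∈ [xs,xt] and a positive integer b with xs ≤ x0 − b such that (a) f(x0) = min over y ∈ [x0−b, xt] of f(y), and (b) f(x0) + C ≤ max over y ∈ [x0−b, x0] of f(y). Then f(x0) = min over y ∈ [xs, xt] of f(y). -/
/-!
Suppose some point of `[xs, xt]` is cheaper than `x0` and let `z` be the largest one; hypothesis (a)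
forces `z < x0 - b`, and `f ≥ f x0` on `(z, x0]`. Take a leftmost maximizer `w` of `f` on `[z, x0]`
and the largest `t` with `[w - t, w + t] ⊆ [z, x0]`. The Ameso inequality at `w ± t` bounds
`2 f w` by `f (w - t) + f (w + t) + C`, and since one of `w ± t` is an endpoint this gives
`f w < f x0 + C`, contradicting (b).
-/

def mceil (x y : ℤ) : ℤ := ⌈((x : ℚ) + (y : ℚ)) / 2⌉

def mfloor (x y : ℤ) : ℤ := ⌊((x : ℚ) + (y : ℚ)) / 2⌋

lemma mceil_sub_add (w t : ℤ) : mceil (w - t) (w + t) = w := by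
  have h : ((w - t : ℤ) : ℚ) + ((w + t : ℤ) : ℚ) = 2 * (w : ℚ) := by push_cast; ring
  rw [mceil, h, mul_div_cancel_left₀ _ two_ne_zero, Int.ceil_intCast]

lemma mfloor_sub_add (w t : ℤ) : mfloor (w - t) (w + t) = w := by
  have h : ((w - t : ℤ) : ℚ) + ((w + t : ℤ) : ℚ) = 2 * (w : ℚ) := by push_cast; ring
  rw [mfloor, h, mul_div_cancel_left₀ _ two_ne_zero, Int.floor_intCast]

def AmesoOn (C : ℝ) (f : ℤ → ℝ) (s : Set ℤ) : Prop :=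
  ∀ x ∈ s, ∀ y ∈ s, f (mceil x y) + f (mfloor x y) ≤ f x + f y + C

namespace AmesoOn

open Set

variable {C : ℝ} {f : ℤ → ℝ} {s : Set ℤ}

lemma mono {t : Set ℤ} (h : AmesoOn C f s) (hts : t ⊆ s) : AmesoOn C f t :=
  fun x hx y hy => h x (hts hx) y (hts hy)

lemma midpoint_le (h : AmesoOn C f s) {w t : ℤ} (hl : w - t ∈ s) (hr : w + t ∈ s) :
    2 * f w ≤ f (w - t) + f (w + t) + C := by
  have := h _ hl _ hr
  rw [mceil_sub_add, mfloor_sub_add] at this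
  linarith

lemma nonneg (h : AmesoOn C f s) {x : ℤ} (hx : x ∈ s) : 0 ≤ C := by
  have := h.midpoint_le (w := x) (t := 0) (by simpa using hx) (by simpa using hx)
  simp only [sub_zero, add_zero] at this
  linarith

lemma le_left_add_or_lt_right_add {a c w : ℤ} (h : AmesoOn C f (Icc a c)) (hw : w ∈ Ico a c)
    (hmax : ∀ v ∈ Icc a c, f v ≤ f w) : f w ≤ f a + C ∨ f w < f c + C := by
  obtain ⟨m, ⟨hmI, hm⟩, hleast⟩ := Int.exists_least_of_bdd (P := fun v => v ∈ Icc a c ∧ f w ≤ f v)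
    ⟨a, fun v hv => hv.1.1⟩ ⟨w, Ico_subset_Icc_self hw, le_rfl⟩
  have hfm : f m = f w := le_antisymm (hmax m hmI) hm
  have hmw : m ≤ w := hleast w ⟨Ico_subset_Icc_self hw, le_rfl⟩
  have hleft : ∀ v ∈ Ico a m, f v < f w := fun v hv => lt_of_not_ge fun hv' =>
    (hleast v ⟨⟨hv.1, by linarith [hv.2, hmI.2]⟩, hv'⟩).not_gt hv.2
  have hC := h.nonneg hmI
  rcases eq_or_lt_of_le hmI.1 with rfl | ham
  · exact Or.inl (by linarith)
  have hmc : m < c := lt_of_le_of_lt hmw hw.2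
  -- the widest interval centred at `m` inside `[a, c]` has an endpoint of `[a, c]` as an end
  set t := min (m - a) (c - m)
  have hmid := h.midpoint_le (w := m) (t := t) ⟨by omega, by omega⟩ ⟨by omega, by omega⟩
  rcases min_choice (m - a) (c - m) with ht | ht
  · have hr := hmax (m + t) ⟨by omega, by omega⟩
    rw [show m - t = a by omega] at hmid
    exact Or.inl (by linarith)
  · have hl := hleft (m - t) ⟨by omega, by omega⟩
    rw [show m + t = c by omega] at hmid
    exact Or.inr (by linarith)

lemma forall_lt_add_of_forall_ge {z x : ℤ} (h : AmesoOn C f (Icc z x)) (hzx : z + 1 < x)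
    (hz : f z < f x) (hge : ∀ v ∈ Ioc z x, f x ≤ f v) : ∀ v ∈ Icc z x, f v < f x + C := by
  obtain ⟨w, hwI, hw⟩ := (Finset.Icc z (x - 1)).exists_max_image f
    (Finset.nonempty_Icc.2 (by omega))
  rw [Finset.mem_Icc] at hwI
  have hxw : f x ≤ f w := (hge (z + 1) ⟨by omega, by omega⟩).trans (hw _ (by simp; omega))
  have hmax : ∀ v ∈ Icc z x, f v ≤ f w := by
    rintro v ⟨hzv, hvx⟩
    rcases eq_or_lt_of_le hvx with rfl | hvx
    · exact hxw
    · exact hw v (by simp; omega)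
  have hwx : f w < f x + C := by
    rcases h.le_left_add_or_lt_right_add ⟨hwI.1, by omega⟩ hmax with h' | h' <;> linarith
  exact fun v hv => (hmax v hv).trans_lt hwx

end AmesoOn

/-- Theorem 2 (global optimizer, left): if `f(x0)` is the minimum of `f` on `[x0-b, xt]`
and `f(x0) + C ≤ max_{[x0-b, x0]} f`, then `f(x0)` is the minimum of `f` on `[xs, xt]`. -/
theorem ameso_global_optimizer_left
    (xs xt : ℤ) (C : ℝ) (f : ℤ → ℝ)
    (hAmeso : ∀ x ∈ Finset.Icc xs xt, ∀ y ∈ Finset.Icc xs xt,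
      f x + f y + C ≥ f (mceil x y) + f (mfloor x y))
    (x0 : ℤ) (hx0l : xs ≤ x0) (hx0r : x0 ≤ xt)
    (b : ℤ) (hb : 0 < b)
    (hmin : f x0 = (Finset.Icc (x0 - b) xt).inf' (Finset.nonempty_Icc.2 (by omega)) f)
    (hmax : f x0 + C ≤ (Finset.Icc (x0 - b) x0).sup' (Finset.nonempty_Icc.2 (by omega)) f) :
    f x0 = (Finset.Icc xs xt).inf' (Finset.nonempty_Icc.2 (by omega)) f := by
  have hA : AmesoOn C f (Set.Icc xs xt) := fun x hx y hy =>
    hAmeso x (Finset.mem_Icc.2 hx) y (Finset.mem_Icc.2 hy)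
  refine le_antisymm (Finset.le_inf' _ _ fun y hy => not_lt.1 fun hy' => ?_)
    (Finset.inf'_le f (Finset.mem_Icc.2 ⟨hx0l, hx0r⟩))
  obtain ⟨z, ⟨hzI, hz⟩, hgreatest⟩ := Int.exists_greatest_of_bdd
    (P := fun v => v ∈ Set.Icc xs xt ∧ f v < f x0) ⟨xt, fun v hv => hv.1.2⟩
    ⟨y, Finset.mem_Icc.1 hy, hy'⟩
  have hzb : z < x0 - b := lt_of_not_ge fun h =>
    (hmin ▸ Finset.inf'_le f (Finset.mem_Icc.2 ⟨h, hzI.2⟩)).not_gt hz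
  have hge : ∀ v ∈ Set.Ioc z x0, f x0 ≤ f v := fun v hv => not_lt.1 fun hv' =>
    (hgreatest v ⟨⟨by linarith [hzI.1, hv.1], hv.2.trans hx0r⟩, hv'⟩).not_gt hv.1
  have hlt := (hA.mono (Set.Icc_subset_Icc hzI.1 hx0r)).forall_lt_add_of_forall_ge
    (by omega) hz hge
  exact hmax.not_gt <| (Finset.sup'_lt_iff _).2 fun v hv => by
    rw [Finset.mem_Icc] at hv
    exact hlt v ⟨by omega, hv.2⟩
end

section
/- A finite subset M of ℤ with at least two elements is closed under taking ⌈(x+y)/2⌉ and ⌊(x+y)/2⌋ of any two of its elements if and only if M is an integer interval, i.e., there exist integers xs < xt such that M = {z ∈ ℤ : xs ≤ z ≤ xt}. -/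
lemma mfloor_eq_ediv (x y : ℤ) : mfloor x y = (x + y) / 2 := by
  rw [mfloor, ← Int.cast_add, ← Nat.cast_ofNat, Rat.floor_intCast_div_natCast, Nat.cast_ofNat]

lemma mceil_eq_ediv (x y : ℤ) : mceil x y = (x + y + 1) / 2 := by
  rw [mceil, ← Int.cast_add, ← Nat.cast_ofNat, Rat.ceil_intCast_div_natCast, Nat.cast_ofNat]
  omega

lemma Finset.Icc_min'_max'_subset_of_exists_between (S : Finset ℤ) (hS : S.Nonempty)
    (hgap : ∀ a ∈ S, ∀ b ∈ S, a + 1 < b → ∃ c ∈ S, a < c ∧ c < b) :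
    Finset.Icc (S.min' hS) (S.max' hS) ⊆ S := by
  intro z hz
  by_contra hzS
  rw [Finset.mem_Icc] at hz
  have hbelow : (S.filter (· < z)).Nonempty :=
    ⟨S.min' hS, Finset.mem_filter.2 ⟨S.min'_mem hS,
      hz.1.lt_of_ne fun h => hzS (h ▸ S.min'_mem hS)⟩⟩
  have habove : (S.filter (z < ·)).Nonempty :=
    ⟨S.max' hS, Finset.mem_filter.2 ⟨S.max'_mem hS,
      hz.2.lt_of_ne' fun h => hzS (h ▸ S.max'_mem hS)⟩⟩
  obtain ⟨haS, haz⟩ := Finset.mem_filter.1 ((S.filter (· < z)).max'_mem hbelow)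
  obtain ⟨hbS, hzb⟩ := Finset.mem_filter.1 ((S.filter (z < ·)).min'_mem habove)
  obtain ⟨c, hcS, hac, hcb⟩ := hgap _ haS _ hbS (by omega)
  rcases lt_trichotomy c z with hcz | rfl | hzc
  · exact hac.not_ge ((S.filter (· < z)).le_max' c (Finset.mem_filter.2 ⟨hcS, hcz⟩))
  · exact hzS hcS
  · exact hcb.not_ge ((S.filter (z < ·)).min'_le c (Finset.mem_filter.2 ⟨hcS, hzc⟩))

/-- Lemma 1: a finite subset of `ℤ` with at least two elements is a one-dimensional
Ameso set (closed under midpoint ceiling and floor) iff it is an integer interval. -/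
theorem ameso_set_iff_interval (M : Finset ℤ) (hcard : 2 ≤ M.card) :
    (∀ x ∈ M, ∀ y ∈ M, mceil x y ∈ M ∧ mfloor x y ∈ M) ↔
    ∃ xs xt : ℤ, xs < xt ∧ M = Finset.Icc xs xt := by
  constructor
  · intro hclosed
    have hne : M.Nonempty := Finset.card_pos.1 (by omega)
    refine ⟨M.min' hne, M.max' hne, M.min'_lt_max'_of_card (by omega), ?_⟩
    refine subset_antisymm (fun m hm => Finset.mem_Icc.2 ⟨M.min'_le m hm, M.le_max' m hm⟩) ?_
    refine M.Icc_min'_max'_subset_of_exists_between hne fun a ha b hb hab => ?_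
    exact ⟨mfloor a b, (hclosed a ha b hb).2, by rw [mfloor_eq_ediv]; omega,
      by rw [mfloor_eq_ediv]; omega⟩
  · rintro ⟨xs, xt, -, rfl⟩ x hx y hy
    simp only [Finset.mem_Icc, mceil_eq_ediv, mfloor_eq_ediv] at hx hy ⊢
    omega
end

section
/- Let xs < xt be integers, C ≥ 0 a real number, and f : ℤ → ℝ a function satisfying the Ameso(C) condition on [xs,xt]. Suppose there exist x0 ∈ [xs,xt] and a positive integer b with x0 + b ≤ xt such that (a) f(x0) = min over y ∈ [x0, x0+b] of f(y), and (b) f(x0) + C ≤ max over y ∈ [x0, x0+b] of f(y). Then f(x0) = min over y ∈ [x0, xt] of f(y). -/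
/-!
Suppose some point of `[x0, xt]` lies below `f x0` and let `z` be the first one; it lies beyond
`x0 + b`, so `[x0, z)` contains a value `≥ f x0 + C`. Let `m` be the rightmost maximiser of `f`
on `[x0, z)`. If `m` is at least as close to `z` as to `x0`, the Ameso inequality for the pair
`2m - z, z` centred at `m` forces `f z ≥ f m - C ≥ f x0`. Otherwise the pair `x0, 2m - x0`
forces `f (2m - x0) ≥ 2 f m - C - f x0 ≥ f m`, so `2m - x0 ∈ (m, z)` is a further maximiser.
-/

lemma mceil_of_add_eq_two_mul {x y m : ℤ} (h : x + y = 2 * m) : mceil x y = m := by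
  rw [mceil, show ((x : ℚ) + y) / 2 = m by rw [← Int.cast_add, h]; push_cast; ring]
  exact Int.ceil_intCast m

lemma mfloor_of_add_eq_two_mul {x y m : ℤ} (h : x + y = 2 * m) : mfloor x y = m := by
  rw [mfloor, show ((x : ℚ) + y) / 2 = m by rw [← Int.cast_add, h]; push_cast; ring]
  exact Int.floor_intCast m

lemma Finset.exists_rightmost_max_image {α β : Type*} [LinearOrder α] [LinearOrder β]
    (s : Finset α) (hs : s.Nonempty) (f : α → β) :
    ∃ m ∈ s, ∀ y ∈ s, f y ≤ f m ∧ (f y = f m → y ≤ m) := by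
  obtain ⟨m, hm, hmax⟩ := s.exists_max_image (fun y => toLex (f y, y)) hs
  exact ⟨m, hm, fun y hy => Prod.Lex.toLex_le_toLex'.1 (hmax y hy)⟩

def Ameso (C : ℝ) (f : ℤ → ℝ) (xs xt : ℤ) : Prop :=
  ∀ x ∈ Finset.Icc xs xt, ∀ y ∈ Finset.Icc xs xt,
    f x + f y + C ≥ f (mceil x y) + f (mfloor x y)

namespace Ameso

variable {C : ℝ} {f : ℤ → ℝ} {xs xt : ℤ}

lemma mono (h : Ameso C f xs xt) {a c : ℤ} (ha : xs ≤ a) (hc : c ≤ xt) : Ameso C f a c :=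
  fun x hx y hy => h x (Finset.Icc_subset_Icc ha hc hx) y (Finset.Icc_subset_Icc ha hc hy)

lemma two_mul_le (h : Ameso C f xs xt) {x y m : ℤ} (hx : x ∈ Finset.Icc xs xt)
    (hy : y ∈ Finset.Icc xs xt) (hxy : x + y = 2 * m) : 2 * f m ≤ f x + f y + C := by
  have := h x hx y hy
  rw [mceil_of_add_eq_two_mul hxy, mfloor_of_add_eq_two_mul hxy] at this
  linarith

lemma le_apply_of_min_on_Ico (h : Ameso C f xs xt) (hlen : xs + 1 < xt)
    (hmin : ∀ y ∈ Finset.Ico xs xt, f xs ≤ f y)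
    (hhigh : ∃ w ∈ Finset.Ico xs xt, f xs + C ≤ f w) :
    f xs ≤ f xt := by
  obtain ⟨w, hw, hfw⟩ := hhigh
  obtain ⟨m, hm, hmax⟩ :=
    (Finset.Ico xs xt).exists_rightmost_max_image (Finset.nonempty_Ico.2 (by omega)) f
  obtain ⟨hxm_le, hmz⟩ := Finset.mem_Ico.1 hm
  have hCm : f xs + C ≤ f m := hfw.trans (hmax w hw).1
  have hxm : xs < m := by
    refine lt_of_le_of_ne hxm_le fun hm_eq => ?_
    have hlast : xt - 1 ∈ Finset.Ico xs xt := Finset.mem_Ico.2 ⟨by omega, by omega⟩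
    have := (hmax _ hlast).2 (le_antisymm (hmax _ hlast).1 (hm_eq ▸ hmin _ hlast))
    omega
  rcases le_or_gt (xs + xt) (2 * m) with hnear | hfar
  · have hu : 2 * m - xt ∈ Finset.Ico xs xt := Finset.mem_Ico.2 ⟨by omega, by omega⟩
    have := h.two_mul_le (Finset.Ico_subset_Icc_self hu) (Finset.right_mem_Icc.2 (by omega))
      (sub_add_cancel _ _)
    linarith [(hmax _ hu).1]
  · have hv : 2 * m - xs ∈ Finset.Ico xs xt := Finset.mem_Ico.2 ⟨by omega, by omega⟩
    have := h.two_mul_le (Finset.left_mem_Icc.2 (by omega)) (Finset.Ico_subset_Icc_self hv)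
      (add_sub_cancel _ _)
    have := (hmax _ hv).2 (le_antisymm (hmax _ hv).1 (by linarith))
    omega

lemma forall_le_of_min_window (h : Ameso C f xs xt) {b : ℤ} (hb : 0 < b)
    (hmin : ∀ y ∈ Finset.Icc xs (xs + b), f xs ≤ f y)
    (hhigh : ∃ w ∈ Finset.Icc xs (xs + b), f xs + C ≤ f w) :
    ∀ y ∈ Finset.Icc xs xt, f xs ≤ f y := by
  suffices ∀ z, xs ≤ z → z ≤ xt → ∀ y ∈ Finset.Icc xs z, f xs ≤ f y from
    fun y hy => this y (Finset.mem_Icc.1 hy).1 (Finset.mem_Icc.1 hy).2 y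
      (Finset.right_mem_Icc.2 (Finset.mem_Icc.1 hy).1)
  intro z hz
  induction z, hz using Int.leInduction with
  | base =>
    intro _ y hy
    rw [Finset.Icc_self, Finset.mem_singleton] at hy
    rw [hy]
  | succ z hxz ih =>
    intro hzt y hy
    obtain ⟨hxy, hyz⟩ := Finset.mem_Icc.1 hy
    rcases hyz.lt_or_eq with hlt | rfl
    · exact ih (by omega) y (Finset.mem_Icc.2 ⟨hxy, by omega⟩)
    by_cases hwin : z + 1 ≤ xs + b
    · exact hmin _ (Finset.mem_Icc.2 ⟨hxy, hwin⟩)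
    obtain ⟨w, hw, hfw⟩ := hhigh
    refine (h.mono le_rfl hzt).le_apply_of_min_on_Ico (by omega) (fun y hy => ?_) ⟨w, ?_, hfw⟩
    · exact ih (by omega) y (by simp only [Finset.mem_Ico, Finset.mem_Icc] at hy ⊢; omega)
    · simp only [Finset.mem_Ico, Finset.mem_Icc] at hw ⊢; omega

end Ameso

/-- Lemma 3 (narrowing to the right): if `f(x0)` is the minimum of `f` on `[x0, x0+b]`
and `f(x0) + C ≤ max_{[x0, x0+b]} f`, then `f(x0)` is the minimum of `f` on `[x0, xt]`. -/
theorem ameso_narrow_right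
    (xs xt : ℤ) (C : ℝ) (f : ℤ → ℝ)
    (hAmeso : ∀ x ∈ Finset.Icc xs xt, ∀ y ∈ Finset.Icc xs xt,
      f x + f y + C ≥ f (mceil x y) + f (mfloor x y))
    (x0 : ℤ) (hx0l : xs ≤ x0) (hx0r : x0 ≤ xt)
    (b : ℤ) (hb : 0 < b)
    (hmin : f x0 = (Finset.Icc x0 (x0 + b)).inf' (Finset.nonempty_Icc.2 (by omega)) f)
    (hmax : f x0 + C ≤ (Finset.Icc x0 (x0 + b)).sup' (Finset.nonempty_Icc.2 (by omega)) f) :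
    f x0 = (Finset.Icc x0 xt).inf' (Finset.nonempty_Icc.2 (by omega)) f := by
  obtain ⟨w, hw, hfw⟩ :=
    Finset.exists_mem_eq_sup' (s := Finset.Icc x0 (x0 + b)) (Finset.nonempty_Icc.2 (by omega)) f
  have hle := Ameso.forall_le_of_min_window (Ameso.mono hAmeso hx0l le_rfl) hb
    (fun y hy => hmin ▸ Finset.inf'_le f hy) ⟨w, hw, hfw ▸ hmax⟩
  exact le_antisymm (Finset.le_inf' _ _ hle) (Finset.inf'_le f (Finset.left_mem_Icc.2 hx0r))
end
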